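/- Let S be a Boolean inverse ∧-monoid with group of units G, and let A be an ultrafilter in S. If X = A ∩ G is non-empty then X X⁻¹ X = X, i.e. X is a coset of a subgroup of G. -/

import Mathlib

universe u

/-- An inverse monoid with zero: every element `a` has a unique generalized
inverse `a⁻¹`, and `0` is an absorbing element. -/
class InverseMonoidWithZero (S : Type u) extends Monoid S, Zero S, Inv S where
  zero_mul' : ∀ a : S, 0 * a = 0
  mul_zero' : ∀ a : S, a * 0 = 0
  mul_inv_mul : ∀ a : S, a * a⁻¹ * a = a
  inv_mul_inv : ∀ a : S, a⁻¹ * a * a⁻¹ = a⁻¹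
  inv_unique : ∀ a b : S, a * b * a = a → b * a * b = b → b = a⁻¹

section BasicDefs

variable {S : Type u}

/-- The natural partial order: `a ≤ b` iff `a = e * b` for some idempotent `e`. -/
def nle [InverseMonoidWithZero S] (a b : S) : Prop :=
  ∃ e : S, e * e = e ∧ a = e * b

/-- `a` and `b` are compatible if `a * b⁻¹` and `a⁻¹ * b` are idempotents. -/
def Compat [InverseMonoidWithZero S] (a b : S) : Prop :=
  (a * b⁻¹) * (a * b⁻¹) = a * b⁻¹ ∧ (a⁻¹ * b) * (a⁻¹ * b) = a⁻¹ * b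

/-- `a` and `b` are orthogonal if `a * b⁻¹ = 0` and `a⁻¹ * b = 0`. -/
def Orth [InverseMonoidWithZero S] (a b : S) : Prop :=
  a * b⁻¹ = 0 ∧ a⁻¹ * b = 0

end BasicDefs

/-- A distributive inverse monoid: every compatible pair has a join (for the
natural partial order), recorded by `sup`, and multiplication distributes over
these binary joins. -/
class DistributiveInverseMonoid (S : Type u) extends InverseMonoidWithZero S where
  sup : S → S → S
  le_sup_left : ∀ a b : S, Compat a b → nle a (sup a b)
  le_sup_right : ∀ a b : S, Compat a b → nle b (sup a b)
  sup_le : ∀ a b c : S, Compat a b → nle a c → nle b c → nle (sup a b) c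
  mul_sup : ∀ a b c : S, Compat a b → c * sup a b = sup (c * a) (c * b)
  sup_mul : ∀ a b c : S, Compat a b → sup a b * c = sup (a * c) (b * c)

/-- A Boolean inverse monoid: a distributive inverse monoid whose idempotents
form a Boolean algebra under the natural partial order; `compl` records the
complementation on idempotents. -/
class BooleanInverseMonoid (S : Type u) extends DistributiveInverseMonoid S where
  compl : S → S
  compl_idem : ∀ e : S, e * e = e → compl e * compl e = compl e
  mul_compl : ∀ e : S, e * e = e → e * compl e = 0
  sup_compl : ∀ e : S, e * e = e → sup e (compl e) = 1

/-- A Boolean inverse ∧-monoid: a Boolean inverse monoid in which every pair of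
elements has a meet with respect to the natural partial order. -/
class BooleanInverseMeetMonoid (S : Type u) extends BooleanInverseMonoid S where
  inf : S → S → S
  inf_le_left : ∀ a b : S, nle (inf a b) a
  inf_le_right : ∀ a b : S, nle (inf a b) b
  le_inf : ∀ a b c : S, nle c a → nle c b → nle c (inf a b)

section MoreDefs

variable {S : Type u}

/-- The join of a compatible pair. -/
def bsup [DistributiveInverseMonoid S] (a b : S) : S := DistributiveInverseMonoid.sup a b

/-- Complementation in the Boolean algebra of idempotents. -/
def bcompl [BooleanInverseMonoid S] (e : S) : S := BooleanInverseMonoid.compl e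

/-- The binary meet. -/
def binf [BooleanInverseMeetMonoid S] (a b : S) : S := BooleanInverseMeetMonoid.inf a b

/-- The fixed-point operator `φ(s) = s ∧ 1`. -/
def phi [BooleanInverseMeetMonoid S] (s : S) : S := binf s 1

/-- The support operator `σ(s) = \overline{φ(s)} ⋅ s⁻¹ s`. -/
def sigma [BooleanInverseMeetMonoid S] (s : S) : S := bcompl (phi s) * (s⁻¹ * s)

/-- An infinitesimal is a non-zero element that squares to zero. -/
def Infinitesimal [InverseMonoidWithZero S] (a : S) : Prop := a ≠ 0 ∧ a * a = 0

/-- A (two-sided) ideal. -/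
def IsMIdeal [InverseMonoidWithZero S] (I : Set S) : Prop :=
  I.Nonempty ∧ ∀ a ∈ I, ∀ s : S, s * a ∈ I ∧ a * s ∈ I

/-- A ∨-ideal: an ideal closed under joins of compatible pairs. -/
def IsVIdeal [DistributiveInverseMonoid S] (I : Set S) : Prop :=
  IsMIdeal I ∧ ∀ a ∈ I, ∀ b ∈ I, Compat a b → bsup a b ∈ I

end MoreDefs

/-- 0-simplifying: the only ∨-ideals are `{0}` and `S`. -/
def ZeroSimplifying (S : Type u) [DistributiveInverseMonoid S] : Prop :=
  ∀ I : Set S, IsVIdeal I → I = {0} ∨ I = Set.univ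

/-- 0-simple: non-trivial and the only ideals are `{0}` and `S`. -/
def ZeroSimple (S : Type u) [InverseMonoidWithZero S] : Prop :=
  (∃ s : S, s ≠ 0) ∧ ∀ I : Set S, IsMIdeal I → I = {0} ∨ I = Set.univ

/-- Fundamental: every element commuting with all idempotents is an idempotent. -/
def Fundamental (S : Type u) [InverseMonoidWithZero S] : Prop :=
  ∀ a : S, (∀ e : S, e * e = e → a * e = e * a) → a * a = a

/-- The Boolean algebra of idempotents is atomless. -/
def IdemAtomless (S : Type u) [InverseMonoidWithZero S] : Prop :=
  ∀ e : S, e * e = e → e ≠ 0 → ∃ f : S, f * f = f ∧ f ≠ 0 ∧ nle f e ∧ f ≠ e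

section Filters

variable {S : Type u}

/-- A filter in a Boolean inverse ∧-monoid: a nonempty subset closed under
binary meets and upward closed in the natural partial order. -/
def IsMFilter [BooleanInverseMeetMonoid S] (A : Set S) : Prop :=
  A.Nonempty ∧ (∀ a ∈ A, ∀ b ∈ A, binf a b ∈ A) ∧ ∀ a ∈ A, ∀ b : S, nle a b → b ∈ A

/-- An ultrafilter: a maximal proper filter. -/
def IsMUltrafilter [BooleanInverseMeetMonoid S] (A : Set S) : Prop :=
  IsMFilter A ∧ (0 : S) ∉ A ∧ ∀ B : Set S, IsMFilter B → (0 : S) ∉ B → A ⊆ B → A = B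

/-- A filter of the Boolean algebra of idempotents (meet of idempotents is
their product). -/
def IsIdemFilter [InverseMonoidWithZero S] (F : Set S) : Prop :=
  F.Nonempty ∧ (∀ e ∈ F, e * e = e) ∧ (∀ e ∈ F, ∀ f ∈ F, e * f ∈ F) ∧
    ∀ e ∈ F, ∀ f : S, f * f = f → nle e f → f ∈ F

/-- An ultrafilter of the Boolean algebra of idempotents. -/
def IsIdemUltrafilter [InverseMonoidWithZero S] (F : Set S) : Prop :=
  IsIdemFilter F ∧ (0 : S) ∉ F ∧
    ∀ G : Set S, IsIdemFilter G → (0 : S) ∉ G → F ⊆ G → F = G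

end Filters

section PencilDefs

variable {S : Type u}

/-- `Preceq e f`: there is a pencil from `e` to `f`, i.e. finitely many
elements `x₁, …, xₘ` with `r(xᵢ) ≤ f` for all `i` and `e = ⋁ d(xᵢ)`
(a least upper bound for the natural partial order). -/
def Preceq [DistributiveInverseMonoid S] (e f : S) : Prop :=
  ∃ l : List S, l ≠ [] ∧ (∀ x ∈ l, nle (x * x⁻¹) f) ∧
    (∀ x ∈ l, nle (x⁻¹ * x) e) ∧ ∀ c : S, (∀ x ∈ l, nle (x⁻¹ * x) c) → nle e c

/-- Piecewise factorizable: every element is a finite join of elements each of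
which lies beneath a unit. -/
def PiecewiseFactorizable (S : Type u) [DistributiveInverseMonoid S] : Prop :=
  ∀ s : S, ∃ l : List S, l ≠ [] ∧ (∀ x ∈ l, ∃ g : S, IsUnit g ∧ nle x g) ∧
    (∀ x ∈ l, nle x s) ∧ ∀ c : S, (∀ x ∈ l, nle x c) → nle s c

/-- A properly infinite idempotent. -/
def ProperlyInfinite [DistributiveInverseMonoid S] (e : S) : Prop :=
  ∃ x y : S, x⁻¹ * x = e ∧ y⁻¹ * y = e ∧ Orth (x * x⁻¹) (y * y⁻¹) ∧
    nle (bsup (x * x⁻¹) (y * y⁻¹)) e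

end PencilDefs

/-- Purely infinite: every non-zero idempotent is properly infinite. -/
def PurelyInfinite (S : Type u) [DistributiveInverseMonoid S] : Prop :=
  ∀ e : S, e * e = e → e ≠ 0 → ProperlyInfinite e

/-!
Given `x, y, w ∈ A`, their meet `b` lies in `A`, and `b = b b⁻¹ b ≤ x y⁻¹ w` because the natural
partial order is compatible with multiplication and inversion; so `x y⁻¹ w ∈ A` by upward closure.
The reverse inclusion is `z = z z⁻¹ z`.
-/

namespace InverseMonoidWithZero

variable {S : Type u} [InverseMonoidWithZero S]

protected theorem inv_inv (a : S) : a⁻¹⁻¹ = a :=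
  (inv_unique a⁻¹ a (inv_mul_inv a) (mul_inv_mul a)).symm

theorem mul_inv_mul_assoc (a x : S) : a * (a⁻¹ * (a * x)) = a * x := by
  rw [← mul_assoc, ← mul_assoc, mul_inv_mul]

theorem inv_mul_inv_assoc (a x : S) : a⁻¹ * (a * (a⁻¹ * x)) = a⁻¹ * x := by
  rw [← mul_assoc, ← mul_assoc, inv_mul_inv]

theorem inv_eq_self_of_isIdempotentElem {e : S} (he : IsIdempotentElem e) : e⁻¹ = e :=
  (inv_unique e e (by rw [he.eq, he.eq]) (by rw [he.eq, he.eq])).symm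

theorem isIdempotentElem_mul_inv (a : S) : IsIdempotentElem (a * a⁻¹) := by
  rw [IsIdempotentElem, ← mul_assoc, mul_inv_mul]

theorem isIdempotentElem_inv_mul (a : S) : IsIdempotentElem (a⁻¹ * a) := by
  rw [IsIdempotentElem, ← mul_assoc, inv_mul_inv]

theorem isUnit_inv {x : S} (hx : IsUnit x) : IsUnit x⁻¹ := by
  obtain ⟨u, rfl⟩ := hx
  refine ⟨u⁻¹, inv_unique _ _ ?_ ?_⟩ <;> simp

/-- `f (ef)⁻¹ e` is also an inverse of `ef`, hence equals `(ef)⁻¹`; this forces `(ef)⁻¹`, and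
so `ef`, to be idempotent. -/
theorem isIdempotentElem_mul {e f : S} (he : IsIdempotentElem e) (hf : IsIdempotentElem f) :
    IsIdempotentElem (e * f) := by
  set b := (e * f)⁻¹ with hb
  have hee := he.mul_self_mul
  have hff := hf.mul_self_mul
  have h₁ : e * (f * (b * (e * f))) = e * f := by simpa only [mul_assoc] using mul_inv_mul (e * f)
  have h₂ : ∀ x, b * (e * (f * (b * x))) = b * x := by
    simpa only [mul_assoc] using inv_mul_inv_assoc (e * f)
  have hinv : f * b * e = b := by
    refine inv_unique _ _ ?_ ?_ <;> simp only [mul_assoc, hee, hff, h₁, h₂]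
  have hidem : IsIdempotentElem b :=
    calc b * b = f * b * e * (f * b * e) := by rw [hinv]
      _ = f * b * e := by simp only [mul_assoc, h₂]
      _ = b := hinv
  rw [← InverseMonoidWithZero.inv_inv (e * f), ← hb, inv_eq_self_of_isIdempotentElem hidem]
  exact hidem

theorem commute_of_isIdempotentElem {e f : S} (he : IsIdempotentElem e)
    (hf : IsIdempotentElem f) : Commute e f := by
  have hef : e * (f * (e * f)) = e * f := by
    simpa only [mul_assoc] using (isIdempotentElem_mul he hf).eq
  have hfe : f * (e * (f * e)) = f * e := by
    simpa only [mul_assoc] using (isIdempotentElem_mul hf he).eq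
  have hinv : f * e = (e * f)⁻¹ := by
    refine inv_unique _ _ ?_ ?_ <;>
      simp only [mul_assoc, he.mul_self_mul, hf.mul_self_mul, hef, hfe]
  exact (hinv.trans (inv_eq_self_of_isIdempotentElem (isIdempotentElem_mul he hf))).symm

theorem isIdempotentElem_conj (x : S) {f : S} (hf : IsIdempotentElem f) :
    IsIdempotentElem (x * f * x⁻¹) := by
  have hcomm : ∀ y, f * (x⁻¹ * (x * y)) = x⁻¹ * (x * (f * y)) := by
    simpa only [mul_assoc] using
      (commute_of_isIdempotentElem hf (isIdempotentElem_inv_mul x)).left_comm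
  rw [IsIdempotentElem]
  simp only [mul_assoc, hcomm, hf.mul_self_mul, mul_inv_mul_assoc]

theorem mul_eq_conj_mul (x : S) {f : S} (hf : IsIdempotentElem f) :
    x * f = x * f * x⁻¹ * x := by
  rw [mul_assoc _ x⁻¹, mul_assoc x f,
    (commute_of_isIdempotentElem hf (isIdempotentElem_inv_mul x)).eq, ← mul_assoc x,
    ← mul_assoc x, mul_inv_mul]

theorem mul_inv_rev_of_isIdempotentElem {e : S} (he : IsIdempotentElem e) (x : S) :
    (e * x)⁻¹ = x⁻¹ * e := by
  have hcomm : ∀ y, x * (x⁻¹ * (e * y)) = e * (x * (x⁻¹ * y)) := by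
    simpa only [mul_assoc] using
      fun y ↦ ((commute_of_isIdempotentElem he (isIdempotentElem_mul_inv x)).left_comm y).symm
  have hx : x * (x⁻¹ * x) = x := by rw [← mul_assoc, mul_inv_mul]
  refine (inv_unique _ _ ?_ ?_).symm
  · simp only [mul_assoc, hcomm, he.mul_self_mul, hx]
  · simp only [mul_assoc, ← hcomm, he.eq, inv_mul_inv_assoc]

end InverseMonoidWithZero

open InverseMonoidWithZero

section NaturalOrder

variable {S : Type u} [InverseMonoidWithZero S] {a b x y : S}

theorem nle.trans (hab : nle a b) (hbx : nle b x) : nle a x := by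
  obtain ⟨e, he, rfl⟩ := hab
  obtain ⟨f, hf, rfl⟩ := hbx
  exact ⟨e * f, isIdempotentElem_mul he hf, (mul_assoc e f x).symm⟩

theorem nle.mul (ha : nle a x) (hb : nle b y) : nle (a * b) (x * y) := by
  obtain ⟨e, he, rfl⟩ := ha
  obtain ⟨f, hf, rfl⟩ := hb
  refine ⟨e * (x * f * x⁻¹), isIdempotentElem_mul he (isIdempotentElem_conj x hf), ?_⟩
  calc e * x * (f * y) = e * (x * f) * y := by simp only [mul_assoc]
    _ = e * (x * f * x⁻¹) * (x * y) := by
      conv_lhs => rw [mul_eq_conj_mul x hf]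
      simp only [mul_assoc]

theorem nle.inv (ha : nle a x) : nle a⁻¹ x⁻¹ := by
  obtain ⟨e, he, rfl⟩ := ha
  refine ⟨x⁻¹ * e * x⁻¹⁻¹, isIdempotentElem_conj x⁻¹ he, ?_⟩
  rw [mul_inv_rev_of_isIdempotentElem he, ← mul_eq_conj_mul x⁻¹ he]

end NaturalOrder

section Filters

variable {S : Type u} [BooleanInverseMeetMonoid S]

theorem binf_le_left (a b : S) : nle (binf a b) a := BooleanInverseMeetMonoid.inf_le_left a b

theorem binf_le_right (a b : S) : nle (binf a b) b := BooleanInverseMeetMonoid.inf_le_right a b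

theorem IsMFilter.mul_inv_mul_mem {A : Set S} (hA : IsMFilter A) {x y w : S} (hx : x ∈ A)
    (hy : y ∈ A) (hw : w ∈ A) : x * y⁻¹ * w ∈ A := by
  obtain ⟨-, hmeet, hup⟩ := hA
  set b := binf x (binf y w)
  have hbA : b ∈ A := hmeet x hx _ (hmeet y hy w hw)
  have hbx : nle b x := binf_le_left _ _
  have hby : nle b y := (binf_le_right _ _).trans (binf_le_left _ _)
  have hbw : nle b w := (binf_le_right _ _).trans (binf_le_right _ _)
  have hb : nle (b * b⁻¹ * b) (x * y⁻¹ * w) := (hbx.mul hby.inv).mul hbw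
  rw [mul_inv_mul] at hb
  exact hup b hbA _ hb

end Filters

theorem statement12_general (S : Type u) [BooleanInverseMeetMonoid S]
    (A : Set S) (hA : IsMUltrafilter A) :
    {z : S | ∃ x ∈ A ∩ {g : S | IsUnit g}, ∃ y ∈ A ∩ {g : S | IsUnit g},
        ∃ w ∈ A ∩ {g : S | IsUnit g}, z = x * y⁻¹ * w} =
      A ∩ {g : S | IsUnit g} := by
  ext z
  constructor
  · rintro ⟨x, ⟨hxA, hxU⟩, y, ⟨hyA, hyU⟩, w, ⟨hwA, hwU⟩, rfl⟩
    exact ⟨hA.1.mul_inv_mul_mem hxA hyA hwA, (hxU.mul (isUnit_inv hyU)).mul hwU⟩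
  · intro hz
    exact ⟨z, hz, z, hz, z, hz, (mul_inv_mul z).symm⟩

/-- Let `A` be an ultrafilter in a Boolean inverse ∧-monoid
with group of units `G`. If `X = A ∩ G` is non-empty then `X X⁻¹ X = X`, i.e.
`X` is a coset of a subgroup of `G`. -/
theorem statement12 (S : Type u) [BooleanInverseMeetMonoid S]
    (A : Set S) (hA : IsMUltrafilter A)
    (hne : (A ∩ {g : S | IsUnit g}).Nonempty) :
    {z : S | ∃ x ∈ A ∩ {g : S | IsUnit g}, ∃ y ∈ A ∩ {g : S | IsUnit g},
        ∃ w ∈ A ∩ {g : S | IsUnit g}, z = x * y⁻¹ * w} =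
      A ∩ {g : S | IsUnit g} :=
  statement12_general S A hA
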